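/- arXiv:1403.1988 — 2 statements merged into one kernel-verified Lean document; each statement's English description precedes it below -/
import Mathlib

section
/- Fix 0 < p < 1. Let E : ℕ → ℝ satisfy E(0) = 0 and, for all n ≥ 1, E(n) = 1 + p·E(n−1) + ((1−p)/n)·Σ_{k=1}^{n} E(k−1). Then (1−p)·E(n) − H_n converges to ln(1−p) as n → ∞. -/
/-!
Multiplying the recurrence by `1 - p` shows that `(1 - p) E(n)` is the unique solution of a
recurrence that is also solved by `∑_{k<n} (1 - p^(k+1))/(k+1)`; the check is a summation by
parts together with a geometric sum. Hence `(1 - p) E(n) - H_n = -∑_{k<n} p^(k+1)/(k+1)`, the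
partial sums of the Mercator series of `log (1 - p)`.
-/

open Finset Filter

/-- The `n`-th harmonic number `H_n = ∑_{k=1}^n 1/k`, with `H 0 = 0`. -/
noncomputable def H (n : ℕ) : ℝ := ∑ k ∈ Finset.Icc 1 n, (1 : ℝ) / k

lemma sum_Icc_one_eq_sum_range {M : Type*} [AddCommMonoid M] (f : ℕ → M) (n : ℕ) :
    ∑ k ∈ Icc 1 n, f k = ∑ k ∈ range n, f (k + 1) := by
  rw [← Ico_add_one_right_eq_Icc, sum_Ico_eq_sum_range, Nat.add_sub_cancel]
  simp only [add_comm]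

lemma sum_range_sum_range_eq {R : Type*} [CommRing R] (a : ℕ → R) (n : ℕ) :
    ∑ j ∈ range n, ∑ k ∈ range j, a k =
      n * ∑ k ∈ range n, a k - ∑ k ∈ range n, (k + 1) * a k := by
  induction n with
  | zero => simp
  | succ n ih =>
    simp only [sum_range_succ, ih]
    push_cast
    ring

lemma one_sub_mul_sum_one_sub_pow {R : Type*} [CommRing R] (p : R) (n : ℕ) :
    (1 - p) * ∑ k ∈ range n, (1 - p ^ (k + 1)) = (1 - p) * n - p * (1 - p ^ n) := by
  induction n with
  | zero => simp
  | succ n ih =>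
    rw [sum_range_succ, mul_add, ih]
    push_cast
    ring

noncomputable def scaledOccupancy (p : ℝ) (n : ℕ) : ℝ :=
  ∑ k ∈ range n, (1 - p ^ (k + 1)) / (k + 1)

lemma scaledOccupancy_succ (p : ℝ) (n : ℕ) :
    scaledOccupancy p (n + 1) = (1 - p) + p * scaledOccupancy p n +
      (1 - p) / (n + 1) * ∑ j ∈ range (n + 1), scaledOccupancy p j := by
  have hweights : ∀ k : ℕ, ((k : ℝ) + 1) * ((1 - p ^ (k + 1)) / (k + 1)) = 1 - p ^ (k + 1) :=
    fun k => mul_div_cancel₀ _ k.cast_add_one_ne_zero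
  have hparts : (1 - p) * ∑ j ∈ range (n + 1), scaledOccupancy p j =
      (1 - p) * ((n + 1) * scaledOccupancy p (n + 1)) -
        ((1 - p) * (n + 1) - p * (1 - p ^ (n + 1))) := by
    unfold scaledOccupancy
    rw [sum_range_sum_range_eq, mul_sub]
    simp only [hweights, one_sub_mul_sum_one_sub_pow]
    push_cast
    ring
  rw [div_mul_eq_mul_div, hparts]
  simp only [scaledOccupancy, sum_range_succ]
  field_simp
  ring

lemma one_sub_mul_eq_scaledOccupancy {p : ℝ} {E : ℕ → ℝ} (hE0 : E 0 = 0)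
    (hrec : ∀ n : ℕ, 1 ≤ n →
      E n = 1 + p * E (n - 1) + ((1 - p) / (n : ℝ)) * ∑ k ∈ Icc 1 n, E (k - 1))
    (n : ℕ) : (1 - p) * E n = scaledOccupancy p n := by
  induction n using Nat.strong_induction_on with
  | _ n ih =>
    rcases n with _ | m
    · simp [hE0, scaledOccupancy]
    · have hsum : (1 - p) * ∑ k ∈ Icc 1 (m + 1), E (k - 1) =
          ∑ j ∈ range (m + 1), scaledOccupancy p j := by
        rw [sum_Icc_one_eq_sum_range, mul_sum]
        exact sum_congr rfl fun j hj => ih j (mem_range.mp hj)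
      rw [hrec (m + 1) m.succ_pos, scaledOccupancy_succ, Nat.add_sub_cancel,
        ← ih m m.lt_succ_self, ← hsum]
      push_cast
      ring

lemma scaledOccupancy_sub_H (p : ℝ) (n : ℕ) :
    scaledOccupancy p n - H n = -∑ k ∈ range n, p ^ (k + 1) / (k + 1) := by
  rw [scaledOccupancy, H, sum_Icc_one_eq_sum_range, ← sum_sub_distrib, ← sum_neg_distrib]
  refine sum_congr rfl fun k _ => ?_
  push_cast
  ring

theorem stmt_3 (p : ℝ) (hp0 : 0 < p) (hp1 : p < 1) (E : ℕ → ℝ) (hE0 : E 0 = 0)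
    (hrec : ∀ n : ℕ, 1 ≤ n →
      E n = 1 + p * E (n - 1) + ((1 - p) / (n : ℝ)) * ∑ k ∈ Finset.Icc 1 n, E (k - 1)) :
    Tendsto (fun n : ℕ => (1 - p) * E n - H n) atTop (nhds (Real.log (1 - p))) := by
  have hmercator := (Real.hasSum_pow_div_log_of_abs_lt_one
    (abs_lt.mpr ⟨by linarith, hp1⟩)).tendsto_sum_nat.neg
  rw [neg_neg] at hmercator
  refine hmercator.congr fun n => ?_
  rw [one_sub_mul_eq_scaledOccupancy hE0 hrec, scaledOccupancy_sub_H]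
end

section
/- Let L : ℕ → ℝ satisfy L(0) = 0 and, for all n ≥ 1, L(n) = 1 + (1/H_n)·Σ_{k=1}^{n} (1/k)·L(k−1). Then for all n ≥ 1, L(n) = Σ_{k=1}^{n} 1/(k·H_k). -/
open Finset

/-!
Writing `S n = ∑_{k=1}^n L(k-1)/k`, the recurrence says `H n * (L n - 1) = S n`, which also holds
for `n = 0` since `H 0 = 0`. Subtracting consecutive instances and using
`H (n+1) = H n + 1/(n+1)` collapses the full-history recurrence to
`L (n+1) = L n + 1/((n+1) H (n+1))`, which telescopes from `L 0 = 0`.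
-/

theorem H_eq_harmonic (n : ℕ) : H n = harmonic n := by
  simp [H, harmonic_eq_sum_Icc]

theorem H_succ (n : ℕ) : H (n + 1) = H n + 1 / ((n : ℝ) + 1) := by
  simp [H_eq_harmonic, harmonic_succ]

theorem H_pos {n : ℕ} (hn : n ≠ 0) : 0 < H n := by
  rw [H_eq_harmonic]
  exact_mod_cast harmonic_pos hn

section Recurrence

variable {L : ℕ → ℝ}
  (hrec : ∀ n : ℕ, 1 ≤ n →
    L n = 1 + (1 / H n) * ∑ k ∈ Icc 1 n, (1 / (k : ℝ)) * L (k - 1))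
include hrec

theorem H_mul_sub_one_eq_sum (n : ℕ) :
    H n * (L n - 1) = ∑ k ∈ Icc 1 n, (1 / (k : ℝ)) * L (k - 1) := by
  rcases Nat.eq_zero_or_pos n with rfl | hn
  · simp [H]
  · rw [hrec n hn]
    field_simp [(H_pos hn.ne').ne']
    ring

theorem eq_add_one_div_mul_H_succ (n : ℕ) :
    L (n + 1) = L n + 1 / (((n + 1 : ℕ) : ℝ) * H (n + 1)) := by
  have hstep := H_mul_sub_one_eq_sum hrec (n + 1)
  rw [sum_Icc_succ_top (by omega), ← H_mul_sub_one_eq_sum hrec n, Nat.add_sub_cancel] at hstep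
  have hH : H (n + 1) ≠ 0 := (H_pos n.succ_ne_zero).ne'
  have hmul : ((n + 1 : ℕ) : ℝ) * H (n + 1) * (L (n + 1) - L n) = 1 := by
    rw [H_succ] at hstep ⊢
    push_cast at hstep ⊢
    field_simp at hstep ⊢
    linear_combination hstep
  rw [← hmul]
  field_simp
  ring

theorem eq_sum_Icc_one_div_mul_H (hL0 : L 0 = 0) (n : ℕ) :
    L n = ∑ k ∈ Icc 1 n, 1 / ((k : ℝ) * H k) := by
  induction n with
  | zero => simpa using hL0
  | succ n ih => rw [sum_Icc_succ_top (by omega), ← ih, eq_add_one_div_mul_H_succ hrec]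

end Recurrence

theorem stmt_12 (L : ℕ → ℝ) (hL0 : L 0 = 0)
    (hrec : ∀ n : ℕ, 1 ≤ n →
      L n = 1 + (1 / H n) * ∑ k ∈ Finset.Icc 1 n, (1 / (k : ℝ)) * L (k - 1)) :
    ∀ n : ℕ, 1 ≤ n → L n = ∑ k ∈ Finset.Icc 1 n, 1 / ((k : ℝ) * H k) :=
  fun n _ => eq_sum_Icc_one_div_mul_H hrec hL0 n
end
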